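/- Let G be a group and N a perfect normal subgroup of G (i.e. N = [N,N]) which has a complement in G. Let j : N ⊗ N → G ⊗ G be the homomorphism induced by the inclusion N → G. Then the sequence 1 → j(N ⊗ N) → G ⊗ G → (G/N) ⊗ (G/N) → 1, where the right-hand map is induced by the quotient map G → G/N, is exact and splits on the right; consequently G ⊗ G ≅ j(N ⊗ N) ⋊ ((G/N) ⊗ (G/N)). -/

import Mathlib

/- Nonabelian tensor square framework (Brown–Loday). -/

namespace NATensor

variable (G : Type*) [Group G]

/-- The relator set for the nonabelian tensor square of `G`:
`g g' ⊗ h = (ᵍg' ⊗ ᵍh)(g ⊗ h)` and `g ⊗ h h' = (g ⊗ h)(ʰg ⊗ ʰh')`. -/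
def rels : Set (FreeGroup (G × G)) :=
  {r | (∃ g g' h : G,
          r = FreeGroup.of (g * g', h) *
              (FreeGroup.of (g * g' * g⁻¹, g * h * g⁻¹) * FreeGroup.of (g, h))⁻¹) ∨
       (∃ g h h' : G,
          r = FreeGroup.of (g, h * h') *
              (FreeGroup.of (g, h) * FreeGroup.of (h * g * h⁻¹, h * h' * h⁻¹))⁻¹)}

/-- The nonabelian tensor square `G ⊗ G`. -/
abbrev TS := PresentedGroup (rels G)

variable {G}

/-- The generator `g ⊗ h` of the nonabelian tensor square. -/
def tmul (g h : G) : TS G := PresentedGroup.of (g, h)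

lemma mk_rel_eq_one {r : FreeGroup (G × G)} (hr : r ∈ rels G) :
    (PresentedGroup.mk (rels G) r : TS G) = 1 :=
  (QuotientGroup.eq_one_iff r).mpr (Subgroup.subset_normalClosure hr)

lemma tmul_rel₁ (g g' h : G) :
    tmul (g * g') h = tmul (g * g' * g⁻¹) (g * h * g⁻¹) * tmul g h := by
  have h1 := mk_rel_eq_one (G := G) (Or.inl ⟨g, g', h, rfl⟩)
  simp only [map_mul, map_inv, mul_inv_eq_one] at h1
  exact h1

lemma tmul_rel₂ (g h h' : G) :
    tmul g (h * h') = tmul g h * tmul (h * g * h⁻¹) (h * h' * h⁻¹) := by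
  have h1 := mk_rel_eq_one (G := G) (Or.inr ⟨g, h, h', rfl⟩)
  simp only [map_mul, map_inv, mul_inv_eq_one] at h1
  exact h1

variable (G)

/-- The homomorphism `κ : G ⊗ G → G`, `g ⊗ h ↦ [g,h] = g h g⁻¹ h⁻¹` (its image is `[G,G]`). -/
def kappa : TS G →* G :=
  PresentedGroup.toGroup (f := fun x : G × G => x.1 * x.2 * x.1⁻¹ * x.2⁻¹) (by
    rintro r (⟨g, g', h, rfl⟩ | ⟨g, h, h', rfl⟩) <;>
      simp only [map_mul, map_inv, FreeGroup.lift_apply_of] <;> group)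

variable {G}

@[simp] lemma kappa_tmul (g h : G) : kappa G (tmul g h) = g * h * g⁻¹ * h⁻¹ :=
  PresentedGroup.toGroup.of _

variable (G)

/-- `J(G) = ker κ ≅ π₃(SK(G,1))`. -/
def J : Subgroup (TS G) := (kappa G).ker

/-- `∇(G)`: the (normal) subgroup of `G ⊗ G` generated by the elements `x ⊗ x`. -/
def nabla : Subgroup (TS G) :=
  Subgroup.normalClosure {t | ∃ x : G, t = tmul x x}

/-- `Δ(G)`: the (normal) subgroup of `G ⊗ G` generated by the `(x ⊗ y)(y ⊗ x)`. -/
def delta : Subgroup (TS G) :=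
  Subgroup.normalClosure {t | ∃ x y : G, t = tmul x y * tmul y x}

instance : (nabla G).Normal := Subgroup.normalClosure_normal

instance : (delta G).Normal := Subgroup.normalClosure_normal

/-- The exterior square `G ∧ G = (G ⊗ G)/∇(G)`. -/
abbrev ES := TS G ⧸ nabla G

/-- The symmetric square `G ⊗̃ G = (G ⊗ G)/Δ(G)`. -/
abbrev SS := TS G ⧸ delta G

variable {G}

/-- The element `g ∧ h` of the exterior square. -/
def emul (g h : G) : ES G := QuotientGroup.mk' (nabla G) (tmul g h)

/-- The image of `g ⊗ h` in the symmetric square. -/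
def smul (g h : G) : SS G := QuotientGroup.mk' (delta G) (tmul g h)

variable {H : Type*} [Group H]

/-- The induced homomorphism `G ⊗ G → H ⊗ H` of a homomorphism `f : G → H`. -/
def tmap (f : G →* H) : TS G →* TS H :=
  PresentedGroup.toGroup (f := fun x : G × G => tmul (f x.1) (f x.2)) (by
    rintro r (⟨g, g', h, rfl⟩ | ⟨g, h, h', rfl⟩) <;>
      simp only [map_mul, map_inv, FreeGroup.lift_apply_of, mul_inv_eq_one]
    · rw [tmul_rel₁]
    · rw [tmul_rel₂])

@[simp] lemma tmap_tmul (f : G →* H) (g h : G) :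
    tmap f (tmul g h) = tmul (f g) (f h) :=
  PresentedGroup.toGroup.of _

lemma nabla_le_comap_nabla (f : G →* H) :
    nabla G ≤ MonoidHom.ker ((QuotientGroup.mk' (nabla H)).comp (tmap f)) := by
  refine Subgroup.normalClosure_le_normal ?_
  rintro _ ⟨y, rfl⟩
  simp only [SetLike.mem_coe, MonoidHom.mem_ker, MonoidHom.comp_apply, tmap_tmul,
    QuotientGroup.mk'_apply, QuotientGroup.eq_one_iff]
  exact Subgroup.subset_normalClosure ⟨f y, rfl⟩

lemma delta_le_comap_delta (f : G →* H) :
    delta G ≤ MonoidHom.ker ((QuotientGroup.mk' (delta H)).comp (tmap f)) := by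
  refine Subgroup.normalClosure_le_normal ?_
  rintro _ ⟨x, y, rfl⟩
  simp only [SetLike.mem_coe, MonoidHom.mem_ker, MonoidHom.comp_apply, map_mul, tmap_tmul,
    QuotientGroup.mk'_apply, ← QuotientGroup.mk_mul, QuotientGroup.eq_one_iff]
  exact Subgroup.subset_normalClosure ⟨f x, f y, rfl⟩

/-- The induced homomorphism `G ∧ G → H ∧ H` of a homomorphism `f : G → H`. -/
def emap (f : G →* H) : ES G →* ES H :=
  QuotientGroup.lift (nabla G) ((QuotientGroup.mk' (nabla H)).comp (tmap f))
    (fun x hx => MonoidHom.mem_ker.mp (nabla_le_comap_nabla f hx))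

@[simp] lemma emap_emul (f : G →* H) (g h : G) :
    emap f (emul g h) = emul (f g) (f h) := by
  simp [emap, emul, QuotientGroup.mk'_apply, QuotientGroup.lift_mk']
  exact congrArg (QuotientGroup.mk' (nabla H)) (tmap_tmul f g h)

/-- The induced homomorphism `G ⊗̃ G → H ⊗̃ H` of a homomorphism `f : G → H`. -/
def smap (f : G →* H) : SS G →* SS H :=
  QuotientGroup.lift (delta G) ((QuotientGroup.mk' (delta H)).comp (tmap f))
    (fun x hx => MonoidHom.mem_ker.mp (delta_le_comap_delta f hx))

variable (G)

lemma nabla_le_ker_kappa : nabla G ≤ (kappa G).ker := by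
  refine Subgroup.normalClosure_le_normal ?_
  rintro _ ⟨x, rfl⟩
  simp only [SetLike.mem_coe, MonoidHom.mem_ker, kappa_tmul]
  group

/-- The homomorphism `κ' : G ∧ G → G`, `g ∧ h ↦ [g,h]` (its image is `[G,G]`). -/
def kappa' : ES G →* G :=
  QuotientGroup.lift (nabla G) (kappa G)
    (fun x hx => MonoidHom.mem_ker.mp (nabla_le_ker_kappa G hx))

/-- The Schur multiplier `M(G) = ker κ' ≅ H₂(G)`. -/
def M : Subgroup (ES G) := (kappa' G).ker

/-- `J̃(G) = J(G)/Δ(G) ≅ π₂ˢ(K(G,1))`, realized as the image of `J(G)` in `G ⊗̃ G`. -/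
def Jt : Subgroup (SS G) := Subgroup.map (QuotientGroup.mk' (delta G)) (J G)

/-- `∇(G)/Δ(G)`, realized as the image of `∇(G)` in `G ⊗̃ G`. -/
def nablaBar : Subgroup (SS G) := Subgroup.map (QuotientGroup.mk' (delta G)) (nabla G)

end NATensor

/-
The complement `B` gives a homomorphic section `ρ` of `G → G/N`, and functoriality
turns it into a section `ρ ⊗ ρ` of `G ⊗ G → G/N ⊗ G/N`; a split surjection is a semidirect
product over its kernel. For the kernel, `N ⊗ G` and `G ⊗ N` lie in `j(N ⊗ N)`: by perfectness it
suffices to treat `g ⊗ [a, b]`, which equals `ᵍ(a ⊗ b) (a ⊗ b)⁻¹`, and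
the swap `g ⊗ h ↦ (h ⊗ g)⁻¹` handles `N ⊗ G`. Since `j(N ⊗ N)` is normal,
`g ⊗ h` and `ρ(gN) ⊗ ρ(hN)` then agree modulo `j(N ⊗ N)`, so the kernel lies in `j(N ⊗ N)`.
-/

theorem Subgroup.isComplement'_of_sup_eq_top_of_inf_eq_bot {G : Type*} [Group G]
    {B N : Subgroup G} [N.Normal] (h1 : N ⊔ B = ⊤) (h2 : N ⊓ B = ⊥) : B.IsComplement' N := by
  refine Subgroup.isComplement'_of_disjoint_and_mul_eq_univ ?_ ?_
  · rw [disjoint_iff, inf_comm, h2]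
  · rw [← Subgroup.mul_normal, sup_comm, h1, Subgroup.coe_top]

theorem Subgroup.IsComplement'.exists_comp_mk'_eq_id {G : Type*} [Group G] {B N : Subgroup G}
    [N.Normal] (h : B.IsComplement' N) :
    ∃ ρ : G ⧸ N →* G, (QuotientGroup.mk' N).comp ρ = MonoidHom.id (G ⧸ N) :=
  ⟨B.subtype.comp h.QuotientMulEquiv.toMonoidHom,
    MonoidHom.ext (Subgroup.IsComplement.quotientGroupMk_leftQuotientEquiv h)⟩

theorem MonoidHom.exists_mulEquiv_semidirectProduct_ker {E Q : Type*} [Group E] [Group Q]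
    (θ : E →* Q) (s : Q →* E) (hs : θ.comp s = MonoidHom.id Q) :
    ∃ ψ : Q →* MulAut θ.ker, Nonempty (E ≃* θ.ker ⋊[ψ] Q) := by
  have hsθ : Function.RightInverse s θ := DFunLike.congr_fun hs
  let S : GroupExtension θ.ker E Q :=
    { inl := θ.ker.subtype
      rightHom := θ
      inl_injective := Subtype.val_injective
      range_inl_eq_ker_rightHom := θ.ker.range_subtype
      rightHom_surjective := hsθ.surjective }
  let σ : S.Splitting := ⟨s, hsθ⟩
  exact ⟨σ.conjAct, ⟨σ.semidirectProductMulEquiv.symm⟩⟩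

namespace NATensor

open scoped commutatorElement

variable {G H K : Type*} [Group G] [Group H] [Group K]

@[ext] lemma hom_ext {φ ψ : TS G →* H} (h : ∀ g g' : G, φ (tmul g g') = ψ (tmul g g')) : φ = ψ :=
  PresentedGroup.ext fun x => h x.1 x.2

lemma tmap_comp (f : H →* K) (g : G →* H) : tmap (f.comp g) = (tmap f).comp (tmap g) := by
  ext; simp

lemma tmap_id : tmap (MonoidHom.id G) = MonoidHom.id (TS G) := by
  ext; simp

lemma one_tmul (h : G) : tmul (1 : G) h = 1 := by
  simpa using tmul_rel₁ (1 : G) 1 h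

lemma tmul_one (g : G) : tmul g (1 : G) = 1 := by
  simpa using tmul_rel₂ g (1 : G) 1

lemma tmap_one : tmap (1 : G →* H) = 1 := by
  ext; simp [one_tmul]

def act (k : G) : TS G →* TS G := tmap (MulAut.conj k).toMonoidHom

@[simp] lemma act_tmul (k g h : G) :
    act k (tmul g h) = tmul (k * g * k⁻¹) (k * h * k⁻¹) := by
  simp [act, MulAut.conj_apply]

lemma act_mul (k l : G) (t : TS G) : act (k * l) t = act k (act l t) := by
  rw [← MonoidHom.comp_apply]
  congr 1
  ext; simp [mul_assoc]

lemma act_one (t : TS G) : act (1 : G) t = t := by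
  have : act (1 : G) = MonoidHom.id (TS G) := by ext; simp
  rw [this, MonoidHom.id_apply]

lemma act_inv_act (k : G) (t : TS G) : act k⁻¹ (act k t) = t := by
  rw [← act_mul, inv_mul_cancel, act_one]

lemma tmul_mul_left (g g' h : G) : tmul (g * g') h = act g (tmul g' h) * tmul g h := by
  rw [tmul_rel₁, act_tmul]

lemma tmul_mul_right (g h h' : G) : tmul g (h * h') = tmul g h * act h (tmul g h') := by
  rw [tmul_rel₂, act_tmul]

lemma tmul_inv_right (g h : G) : tmul g h⁻¹ = (act h⁻¹ (tmul g h))⁻¹ := by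
  have h1 := tmul_mul_right g h h⁻¹
  rw [mul_inv_cancel, tmul_one, eq_comm, mul_eq_one_iff_inv_eq] at h1
  rw [← act_inv_act h (tmul g h⁻¹), ← h1, map_inv]

-- Expand `(u v) ⊗ (w z)` in the two possible orders.
lemma act_mul_tmul_comm (u w v z : G) :
    act (u * w) (tmul v z) * tmul u w = tmul u w * act (w * u) (tmul v z) := by
  have e1 : tmul (u * v) (w * z)
      = act u (tmul v w) * (act (u * w) (tmul v z) * tmul u w) * act w (tmul u z) := by
    rw [tmul_mul_left u v (w * z), tmul_mul_right v w z, tmul_mul_right u w z, map_mul,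
      ← act_mul]
    simp only [mul_assoc]
  have e2 : tmul (u * v) (w * z)
      = act u (tmul v w) * (tmul u w * act (w * u) (tmul v z)) * act w (tmul u z) := by
    rw [tmul_mul_right (u * v) w z, tmul_mul_left u v w, tmul_mul_left u v z, map_mul,
      ← act_mul]
    simp only [mul_assoc]
  exact mul_left_cancel (mul_right_cancel (e1.symm.trans e2))

lemma tmul_mul_mul_inv_eq_act (u w : G) (t : TS G) :
    tmul u w * t * (tmul u w)⁻¹ = act ⁅u, w⁆ t := by
  suffices (MulAut.conj (tmul u w)).toMonoidHom = act ⁅u, w⁆ from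
    (DFunLike.congr_fun this t).trans rfl
  ext v z
  calc tmul u w * tmul v z * (tmul u w)⁻¹
      = tmul u w * act (w * u) (act (w * u)⁻¹ (tmul v z)) * (tmul u w)⁻¹ := by
        rw [← act_mul, mul_inv_cancel, act_one]
    _ = act (u * w) (act (w * u)⁻¹ (tmul v z)) := by
        simp only [act_tmul (w * u)⁻¹ v z, ← act_mul_tmul_comm]
        group
    _ = act ⁅u, w⁆ (tmul v z) := by
        rw [← act_mul, commutatorElement_def]
        congr 1
        group

lemma tmul_conj_mul_tmul (x g h : G) :
    tmul x (g * h * g⁻¹) * tmul g h = act x (tmul g h) * tmul x h := by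
  have h1 := tmul_mul_left g (g⁻¹ * x * g) h
  rw [act_tmul, show g * (g⁻¹ * x * g) = x * g by group,
    mul_inv_cancel_right] at h1
  rw [← h1, tmul_mul_left]

lemma tmul_commutatorElement_right (x g h : G) :
    tmul x ⁅g, h⁆ = act x (tmul g h) * (tmul g h)⁻¹ := by
  rw [commutatorElement_def, tmul_mul_right, tmul_inv_right, map_inv, ← act_mul,
    ← commutatorElement_def, ← tmul_mul_mul_inv_eq_act, eq_mul_inv_of_mul_eq (tmul_conj_mul_tmul x g h)]
  group

def flip : TS G →* TS G :=
  PresentedGroup.toGroup (f := fun x : G × G => (tmul x.2 x.1)⁻¹) (by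
    rintro r (⟨g, g', h, rfl⟩ | ⟨g, h, h', rfl⟩) <;>
      simp only [map_mul, map_inv, FreeGroup.lift_apply_of] <;>
      rw [mul_inv_eq_one, ← mul_inv_rev, inv_inj]
    · exact tmul_rel₂ h g g'
    · exact tmul_rel₁ h h' g)

@[simp] lemma flip_tmul (g h : G) : flip (tmul g h) = (tmul h g)⁻¹ :=
  PresentedGroup.toGroup.of _

lemma tmap_flip (f : G →* H) (t : TS G) : tmap f (flip t) = flip (tmap f t) := by
  rw [← MonoidHom.comp_apply, ← MonoidHom.comp_apply]
  congr 1
  ext; simp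

section Subgroup

variable (N : Subgroup G)

lemma flip_mem_range_tmap_subtype {t : TS G} (ht : t ∈ (tmap N.subtype).range) :
    flip t ∈ (tmap N.subtype).range := by
  obtain ⟨s, rfl⟩ := ht
  exact ⟨flip s, tmap_flip _ s⟩

variable [N.Normal]

lemma act_mem_range_tmap_subtype (k : G) {t : TS G} (ht : t ∈ (tmap N.subtype).range) :
    act k t ∈ (tmap N.subtype).range := by
  obtain ⟨s, rfl⟩ := ht
  have hconj : (MulAut.conj k).toMonoidHom.comp N.subtype
      = N.subtype.comp (MulAut.conjNormal k).toMonoidHom := by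
    ext; simp [MulAut.conjNormal_apply]
  refine ⟨tmap (MulAut.conjNormal k).toMonoidHom s, ?_⟩
  rw [act, ← MonoidHom.comp_apply, ← tmap_comp, ← hconj, tmap_comp, MonoidHom.comp_apply]

instance range_tmap_subtype_normal : (tmap N.subtype).range.Normal := by
  rw [← Subgroup.normalizer_eq_top_iff, eq_top_iff]
  rintro x -
  refine PresentedGroup.generated_by _ _ (fun ⟨g, h⟩ => Subgroup.mem_normalizer_iff.mpr ?_) x
  intro t
  change _ ↔ tmul g h * t * (tmul g h)⁻¹ ∈ _
  rw [tmul_mul_mul_inv_eq_act]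
  refine ⟨act_mem_range_tmap_subtype N _, fun ht => ?_⟩
  rw [← act_inv_act ⁅g, h⁆ t]
  exact act_mem_range_tmap_subtype N _ ht

lemma tmul_mem_range_tmap_subtype_right (hperf : commutator N = ⊤) (g : G) {n : G}
    (hn : n ∈ N) : tmul g n ∈ (tmap N.subtype).range := by
  let S : Subgroup N :=
    { carrier := {a | ∀ g : G, tmul g (a : G) ∈ (tmap N.subtype).range}
      one_mem' := fun g => by simp [tmul_one]
      mul_mem' := fun ha hb g => by
        simpa only [Subgroup.coe_mul, tmul_mul_right] using
          mul_mem (ha g) (act_mem_range_tmap_subtype N _ (hb g))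
      inv_mem' := fun ha g => by
        simpa only [Subgroup.coe_inv, tmul_inv_right] using
          inv_mem (act_mem_range_tmap_subtype N _ (ha g)) }
  have hS : commutator N ≤ S := by
    rw [commutator_def, Subgroup.commutator_le]
    rintro a - b - g
    have hab : tmul (a : G) b ∈ (tmap N.subtype).range := ⟨tmul a b, tmap_tmul _ _ _⟩
    change tmul g ((⁅a, b⁆ : N) : G) ∈ _
    rw [show ((⁅a, b⁆ : N) : G) = ⁅(a : G), (b : G)⁆ from rfl, tmul_commutatorElement_right]
    exact mul_mem (act_mem_range_tmap_subtype N g hab) (inv_mem hab)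
  exact hS (hperf ▸ Subgroup.mem_top (⟨n, hn⟩ : N)) g

lemma tmul_mem_range_tmap_subtype_left (hperf : commutator N = ⊤) {n : G} (hn : n ∈ N)
    (g : G) : tmul n g ∈ (tmap N.subtype).range := by
  simpa using flip_mem_range_tmap_subtype N (tmul_mem_range_tmap_subtype_right N hperf g hn)

lemma range_tmap_subtype_le_ker : (tmap N.subtype).range ≤ (tmap (QuotientGroup.mk' N)).ker := by
  rw [MonoidHom.range_le_ker_iff, ← tmap_comp, QuotientGroup.mk'_comp_subtype, tmap_one]

variable (L : Subgroup (TS G)) [L.Normal]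

lemma mk_tmul_eq_of_inv_mul_mem (hl : ∀ n ∈ N, ∀ g, tmul n g ∈ L) (hr : ∀ n ∈ N, ∀ g, tmul g n ∈ L)
    {g g' h h' : G} (hg : g⁻¹ * g' ∈ N) (hh : h⁻¹ * h' ∈ N) :
    (tmul g' h' : TS G ⧸ L) = tmul g h := by
  obtain ⟨n, hn, rfl⟩ : ∃ n ∈ N, g' = g * n := ⟨_, hg, (mul_inv_cancel_left g g').symm⟩
  obtain ⟨m, hm, rfl⟩ : ∃ m ∈ N, h' = h * m := ⟨_, hh, (mul_inv_cancel_left h h').symm⟩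
  have h1 : act g (tmul n h) ∈ L := by
    rw [act_tmul]
    exact hl _ (Subgroup.Normal.conj_mem ‹_› n hn g) _
  have h2 : act h (tmul (g * n) m) ∈ L := by
    rw [act_tmul]
    exact hr _ (Subgroup.Normal.conj_mem ‹_› m hm h) _
  rw [tmul_mul_right, tmul_mul_left, QuotientGroup.mk_mul, QuotientGroup.mk_mul,
    (QuotientGroup.eq_one_iff _).mpr h1, (QuotientGroup.eq_one_iff _).mpr h2, one_mul, mul_one]

lemma ker_tmap_mk'_le (hl : ∀ n ∈ N, ∀ g, tmul n g ∈ L) (hr : ∀ n ∈ N, ∀ g, tmul g n ∈ L)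
    (ρ : G ⧸ N →* G) (hρ : (QuotientGroup.mk' N).comp ρ = MonoidHom.id (G ⧸ N)) :
    (tmap (QuotientGroup.mk' N)).ker ≤ L := by
  have hρN (g : G) : g⁻¹ * ρ g ∈ N :=
    QuotientGroup.eq.mp (DFunLike.congr_fun hρ (g : G ⧸ N)).symm
  have hfac : (QuotientGroup.mk' L).comp (tmap (ρ.comp (QuotientGroup.mk' N)))
      = QuotientGroup.mk' L := by
    ext g h
    exact mk_tmul_eq_of_inv_mul_mem N L hl hr (hρN g) (hρN h)
  intro t ht
  rw [← QuotientGroup.eq_one_iff, ← QuotientGroup.mk'_apply, ← hfac, MonoidHom.comp_apply,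
    tmap_comp, MonoidHom.comp_apply, MonoidHom.mem_ker.mp ht, map_one, map_one]

end Subgroup

end NATensor

open NATensor in
/-- if `N` is a perfect normal subgroup of `G` with a complement, then the
sequence `1 → j(N ⊗ N) → G ⊗ G → (G/N) ⊗ (G/N) → 1` is exact and splits on the right;
consequently `G ⊗ G ≅ j(N ⊗ N) ⋊ ((G/N) ⊗ (G/N))`. -/
theorem tensor_square_of_perfect_normal_complemented (G : Type*) [Group G]
    (N : Subgroup G) [N.Normal] (hperf : commutator ↥N = ⊤)
    (B : Subgroup G) (hB1 : N ⊔ B = ⊤) (hB2 : N ⊓ B = ⊥) :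
    Function.Surjective (tmap (QuotientGroup.mk' N)) ∧
    MonoidHom.ker (tmap (QuotientGroup.mk' N)) = MonoidHom.range (tmap N.subtype) ∧
    (∃ s : TS (G ⧸ N) →* TS G,
      (tmap (QuotientGroup.mk' N)).comp s = MonoidHom.id (TS (G ⧸ N))) ∧
    ∃ ψ : TS (G ⧸ N) →* MulAut ↥(MonoidHom.range (tmap N.subtype)),
      Nonempty (TS G ≃* ↥(MonoidHom.range (tmap N.subtype)) ⋊[ψ] TS (G ⧸ N)) := by
  obtain ⟨ρ, hρ⟩ :=
    (Subgroup.isComplement'_of_sup_eq_top_of_inf_eq_bot hB1 hB2).exists_comp_mk'_eq_id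
  have hs : (tmap (QuotientGroup.mk' N)).comp (tmap ρ) = MonoidHom.id (TS (G ⧸ N)) := by
    rw [← tmap_comp, hρ, tmap_id]
  have hker : MonoidHom.ker (tmap (QuotientGroup.mk' N)) = MonoidHom.range (tmap N.subtype) :=
    le_antisymm
      (ker_tmap_mk'_le N _ (fun _ hn => tmul_mem_range_tmap_subtype_left N hperf hn)
        (fun _ hn g => tmul_mem_range_tmap_subtype_right N hperf g hn) ρ hρ)
      (range_tmap_subtype_le_ker N)
  refine ⟨Function.RightInverse.surjective (DFunLike.congr_fun hs), hker, ⟨tmap ρ, hs⟩, ?_⟩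
  rw [← hker]
  exact (tmap (QuotientGroup.mk' N)).exists_mulEquiv_semidirectProduct_ker (tmap ρ) hs
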